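/- arXiv:1801.09085 — 4 statements merged into one kernel-verified Lean document; each statement's English description precedes it below -/
import Mathlib

section
/- Let V be a real vector space of countable dimension (Module.rank ℝ V ≤ ℵ₀). Then every countable sequence (N_n)_{n ∈ ℕ} of norms on V is dominated: there exist a norm N' on V and positive real constants c_n such that N_n(x) ≤ c_n · N'(x) for all n ∈ ℕ and all x ∈ V. -/
/-- `N` is a norm on the real vector space `V`. -/
def IsNorm {V : Type*} [AddCommGroup V] [Module ℝ V] (N : V → ℝ) : Prop :=
  (∀ x, 0 ≤ N x) ∧ (∀ x, N x = 0 ↔ x = 0) ∧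
    (∀ (a : ℝ) (x : V), N (a • x) = |a| * N x) ∧
    ∀ x y, N (x + y) ≤ N x + N y

/-!
Fix a basis `(bᵢ)` of `V`, countable by the dimension hypothesis, and an injection
`e : ι → ℕ`. A diagonal choice gives weights `wᵢ ≥ |N_n(bᵢ)|` for the finitely many `n ≤ e i`
and constants `c_n ≥ |N_n(bᵢ)|` for the finitely many `i` with `e i < n`, both at least `1`, so
that `N_n(bᵢ) ≤ c_n wᵢ` for all `n` and `i`. By the triangle inequality each `N_n` is then
bounded by `c_n` times the weighted `ℓ¹` norm `x ↦ ∑ᵢ |xᵢ| wᵢ`.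
-/

noncomputable def weightedL1 {ι V : Type*} [AddCommGroup V] [Module ℝ V]
    (b : Module.Basis ι ℝ V) (w : ι → ℝ) (x : V) : ℝ :=
  (b.repr x).sum fun i a => |a| * w i

section WeightedL1

variable {ι V : Type*} [AddCommGroup V] [Module ℝ V] (b : Module.Basis ι ℝ V) (w : ι → ℝ)

theorem weightedL1_eq_sum_of_support_subset {x : V} {s : Finset ι}
    (hs : (b.repr x).support ⊆ s) : weightedL1 b w x = ∑ i ∈ s, |b.repr x i| * w i :=
  Finsupp.sum_of_support_subset _ hs _ fun i _ => by simp

theorem isNorm_weightedL1 (hw : ∀ i, 0 < w i) : IsNorm (weightedL1 b w) := by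
  classical
  have term_nonneg : ∀ x i, 0 ≤ |b.repr x i| * w i := fun x i =>
    mul_nonneg (abs_nonneg _) (hw i).le
  refine ⟨fun x => Finset.sum_nonneg fun i _ => term_nonneg x i, fun x => ⟨fun h => ?_, ?_⟩,
    fun a x => ?_, fun x y => ?_⟩
  · rw [weightedL1, Finsupp.sum, Finset.sum_eq_zero_iff_of_nonneg fun i _ => term_nonneg x i] at h
    suffices (b.repr x).support = ∅ by simpa using this
    refine Finset.eq_empty_of_forall_notMem fun i hi => ?_
    exact mul_ne_zero (abs_ne_zero.2 (Finsupp.mem_support_iff.1 hi)) (hw i).ne' (h i hi)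
  · rintro rfl
    simp [weightedL1]
  · rw [weightedL1, map_smul, Finsupp.sum_smul_index' fun i => by simp, weightedL1,
      Finsupp.mul_sum]
    simp only [smul_eq_mul, abs_mul, mul_assoc]
  · have hsub := Finsupp.support_add (g₁ := b.repr x) (g₂ := b.repr y)
    rw [← map_add] at hsub
    rw [weightedL1_eq_sum_of_support_subset b w hsub,
      weightedL1_eq_sum_of_support_subset b w Finset.subset_union_left,
      weightedL1_eq_sum_of_support_subset b w Finset.subset_union_right,
      ← Finset.sum_add_distrib]
    refine Finset.sum_le_sum fun i _ => ?_
    rw [← add_mul, map_add, Finsupp.add_apply]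
    exact mul_le_mul_of_nonneg_right (abs_add_le _ _) (hw i).le

theorem IsNorm.le_mul_weightedL1 {N : V → ℝ} (hN : IsNorm N) {C : ℝ}
    (hb : ∀ i, N (b i) ≤ C * w i) (x : V) : N x ≤ C * weightedL1 b w x := by
  obtain ⟨-, hN0, hNsmul, hNadd⟩ := hN
  calc N x = N ((b.repr x).sum fun i a => a • b i) := by
        rw [← Finsupp.linearCombination_apply, b.linearCombination_repr]
    _ ≤ ∑ i ∈ (b.repr x).support, N (b.repr x i • b i) :=
        Finset.le_sum_of_subadditive N ((hN0 0).2 rfl).le hNadd _ _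
    _ ≤ ∑ i ∈ (b.repr x).support, |b.repr x i| * (C * w i) := by
        refine Finset.sum_le_sum fun i _ => ?_
        rw [hNsmul]
        exact mul_le_mul_of_nonneg_left (hb i) (abs_nonneg _)
    _ = C * weightedL1 b w x := by
        rw [weightedL1, Finsupp.sum, Finset.mul_sum]
        exact Finset.sum_congr rfl fun i _ => by ring

end WeightedL1

theorem exists_pos_weight_le_mul {ι : Type*} [Countable ι] (f : ℕ → ι → ℝ) :
    ∃ w : ι → ℝ, (∀ i, 0 < w i) ∧ ∃ c : ℕ → ℝ, (∀ n, 0 < c n) ∧ ∀ n i, f n i ≤ c n * w i := by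
  obtain ⟨e, he⟩ := Countable.exists_injective_nat ι
  set w : ι → ℝ := fun i => 1 + ∑ k ∈ Finset.range (e i + 1), |f k i|
  set c : ℕ → ℝ := fun n => 1 + ∑ i ∈ (Finset.range n).preimage e he.injOn, |f n i|
  have one_le_w : ∀ i, 1 ≤ w i := fun i =>
    le_add_of_nonneg_right (Finset.sum_nonneg fun _ _ => abs_nonneg _)
  have one_le_c : ∀ n, 1 ≤ c n := fun n =>
    le_add_of_nonneg_right (Finset.sum_nonneg fun _ _ => abs_nonneg _)
  refine ⟨w, fun i => one_pos.trans_le (one_le_w i), c, fun n => one_pos.trans_le (one_le_c n),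
    fun n i => ?_⟩
  rcases le_or_gt n (e i) with hn | hn
  · have : |f n i| ≤ w i := le_add_of_nonneg_of_le zero_le_one <|
      Finset.single_le_sum (f := fun k => |f k i|) (fun _ _ => abs_nonneg _)
        (Finset.mem_range.2 (Nat.lt_succ_of_le hn))
    calc f n i ≤ w i := (le_abs_self _).trans this
      _ ≤ c n * w i := le_mul_of_one_le_left (zero_le_one.trans (one_le_w i)) (one_le_c n)
  · have : |f n i| ≤ c n := le_add_of_nonneg_of_le zero_le_one <|
      Finset.single_le_sum (f := fun j => |f n j|) (fun _ _ => abs_nonneg _)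
        (Finset.mem_preimage.2 (Finset.mem_range.2 hn))
    calc f n i ≤ c n := (le_abs_self _).trans this
      _ ≤ c n * w i := le_mul_of_one_le_right (zero_le_one.trans (one_le_c n)) (one_le_w i)

/-- On a vector space of countable dimension, every countable sequence of norms
is dominated by a single norm. -/
theorem stmt2 {V : Type*} [AddCommGroup V] [Module ℝ V]
    (hV : Module.rank ℝ V ≤ Cardinal.aleph0)
    (N : ℕ → V → ℝ) (hN : ∀ n, IsNorm (N n)) :
    ∃ N' : V → ℝ, IsNorm N' ∧
      ∃ c : ℕ → ℝ, (∀ n, 0 < c n) ∧ ∀ n x, N n x ≤ c n * N' x := by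
  let b := Module.Basis.ofVectorSpace ℝ V
  have : Countable (Module.Basis.ofVectorSpaceIndex ℝ V) := by
    rw [← Cardinal.mk_le_aleph0_iff, b.mk_eq_rank'']
    exact hV
  obtain ⟨w, hw, c, hc, hle⟩ := exists_pos_weight_le_mul fun n i => N n (b i)
  exact ⟨weightedL1 b w, isNorm_weightedL1 b w hw, c, hc,
    fun n => (hN n).le_mul_weightedL1 b w (hle n)⟩
end

section
/- Let V be a real vector space of uncountable dimension κ (Module.rank ℝ V = κ with κ > ℵ₀). Then there exists a family of norms on V indexed by a set of cardinality κ that is not dominated: for every norm N' on V there is some index i such that no positive constant c satisfies N_i ≤ c · N' pointwise. -/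
/-!
Embed `ω₁` into a basis `(b j)` of `V`. For each `β < ω₁` the segment `Iio β` is countable,
so it injects into `ℕ` by some `E · β`; let `N α` be the `ℓ¹` norm in the basis with weight
`E α β + 1` at `b β`. If `N'` dominated every `N α` with constants `c α`, then
`E α β + 1 ≤ c α * N' (b β)` for all `α`, `β`. Uncountably many `α` have `c α ≤ m` and
uncountably many `β` have `N' (b β) ≤ n`; choosing `m * n + 2` such `α` and such a `β` above
all of them, `E · β` would inject `m * n + 2` points into `{0, …, m * n}`.
-/

universe u

open Cardinal Set

section WeightedNorm

variable {ι V : Type*} [AddCommGroup V] [Module ℝ V]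

noncomputable def weightedNorm (b : Module.Basis ι ℝ V) (w : ι → ℝ) (x : V) : ℝ :=
  (b.repr x).sum fun j a => w j * |a|

variable (b : Module.Basis ι ℝ V)

lemma weightedNorm_eq_sum (w : ι → ℝ) {x : V} {s : Finset ι} (hs : (b.repr x).support ⊆ s) :
    weightedNorm b w x = ∑ j ∈ s, w j * |b.repr x j| :=
  Finsupp.sum_of_support_subset _ hs _ (by simp)

lemma weightedNorm_basis (w : ι → ℝ) (j : ι) : weightedNorm b w (b j) = w j := by
  simp [weightedNorm, Finsupp.sum_single_index]

lemma isNorm_weightedNorm {w : ι → ℝ} (hw : ∀ j, 0 < w j) : IsNorm (weightedNorm b w) := by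
  classical
  have hterm : ∀ x j, 0 ≤ w j * |b.repr x j| := fun x j => mul_nonneg (hw j).le (abs_nonneg _)
  refine ⟨fun x => ?_, fun x => ⟨fun h => ?_, ?_⟩, fun a x => ?_, fun x y => ?_⟩
  · rw [weightedNorm_eq_sum b w subset_rfl]
    exact Finset.sum_nonneg fun j _ => hterm x j
  · by_contra hx
    obtain ⟨j, hj⟩ : (b.repr x).support.Nonempty := by simpa using hx
    have hpos : 0 < w j * |b.repr x j| :=
      mul_pos (hw j) (abs_pos.mpr (Finsupp.mem_support_iff.mp hj))
    have := Finset.single_le_sum (fun j _ => hterm x j) hj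
    rw [← weightedNorm_eq_sum b w subset_rfl] at this
    linarith
  · rintro rfl
    simp [weightedNorm]
  · rw [weightedNorm_eq_sum b w (by simpa using Finsupp.support_smul),
      weightedNorm_eq_sum b w subset_rfl, Finset.mul_sum]
    refine Finset.sum_congr rfl fun j _ => ?_
    simp only [map_smul, Finsupp.smul_apply, smul_eq_mul, abs_mul]
    ring
  · rw [weightedNorm_eq_sum b w (s := (b.repr x).support ∪ (b.repr y).support)
        (by simpa using Finsupp.support_add),
      weightedNorm_eq_sum b w Finset.subset_union_left,
      weightedNorm_eq_sum b w Finset.subset_union_right, ← Finset.sum_add_distrib]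
    refine Finset.sum_le_sum fun j _ => ?_
    rw [map_add, Finsupp.add_apply, ← mul_add]
    exact mul_le_mul_of_nonneg_left (abs_add_le _ _) (hw j).le

end WeightedNorm

lemma exists_not_countable_setOf_abs_le_natCast {α : Type*} [Uncountable α] (f : α → ℝ) :
    ∃ n : ℕ, ¬ {x | |f x| ≤ n}.Countable := by
  by_contra! h
  have hcover : ⋃ n : ℕ, {x | |f x| ≤ n} = Set.univ :=
    eq_univ_of_forall fun x => mem_iUnion.mpr (exists_nat_ge |f x|)
  exact not_countable_univ (hcover ▸ countable_iUnion h : (Set.univ : Set α).Countable)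

lemma exists_mem_forall_lt_of_not_countable {W : Type*} [LinearOrder W]
    (hIio : ∀ a : W, (Iio a).Countable) {S : Set W} (hS : ¬ S.Countable) (F : Finset W) :
    ∃ b ∈ S, ∀ a ∈ F, a < b := by
  by_contra! h
  refine hS (((F.countable_toSet).biUnion fun a _ => (hIio a).insert a).mono fun b hb => ?_)
  obtain ⟨a, ha, hba⟩ := h b hb
  exact mem_biUnion ha (by rw [Iio_insert]; exact hba)

lemma exists_mul_lt_of_injOn_Iio {W : Type*} [LinearOrder W] [Uncountable W]
    (hIio : ∀ a : W, (Iio a).Countable) {E : W → W → ℕ} (hE : ∀ b, InjOn (E · b) (Iio b))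
    (c h : W → ℝ) : ∃ a b, c a * h b < E a b := by
  by_contra! hle
  obtain ⟨m, hm⟩ := exists_not_countable_setOf_abs_le_natCast c
  obtain ⟨n, hn⟩ := exists_not_countable_setOf_abs_le_natCast h
  obtain ⟨F, hFm, hFcard⟩ :=
    Set.Infinite.exists_subset_card_eq (fun hfin => hm hfin.countable) (m * n + 2)
  obtain ⟨b, hbn, hFb⟩ := exists_mem_forall_lt_of_not_countable hIio hn F
  have hbound : ∀ a ∈ F, E a b < m * n + 1 := fun a ha => by
    have : (E a b : ℝ) ≤ m * n := calc
      (E a b : ℝ) ≤ c a * h b := hle a b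
      _ ≤ |c a| * |h b| := abs_mul (c a) (h b) ▸ le_abs_self _
      _ ≤ m * n := mul_le_mul (hFm ha) hbn (abs_nonneg _) (Nat.cast_nonneg _)
    exact Nat.lt_succ_of_le (mod_cast this)
  have := Finset.card_le_card_of_injOn (E · b) (fun a ha => Finset.mem_range.mpr (hbound a ha))
    ((hE b).mono fun a ha => hFb a ha)
  simp only [hFcard, Finset.card_range] at this
  omega

lemma exists_mul_lt_of_aleph_one_le {ι : Type u} (hι : ℵ₁ ≤ #ι) :
    ∃ E : ι → ι → ℕ, ∀ c h : ι → ℝ, ∃ i j, c i * h j < E i j := by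
  let W := (ℵ₁ : Cardinal.{u}).ord.ToType
  have hIio (a : W) : (Iio a).Countable := by
    have := mk_Iio_lt a (by rw [mk_toType, card_ord, Ordinal.type_toType])
    rw [mk_toType, card_ord, lt_aleph_one_iff] at this
    exact le_aleph0_iff_set_countable.mp this
  have : Uncountable W := by
    rw [← not_countable_iff, ← mk_le_aleph0_iff, mk_toType, card_ord]
    exact not_le.mpr aleph0_lt_aleph_one
  obtain ⟨g⟩ : Nonempty (W ↪ ι) := (le_def W ι).mp (by rwa [mk_toType, card_ord])
  choose e he using fun b => countable_iff_exists_injOn.mp (hIio b)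
  refine ⟨Function.extend g (fun a => Function.extend g (e · a) 0) 0, fun c h => ?_⟩
  obtain ⟨a, b, hab⟩ :=
    exists_mul_lt_of_injOn_Iio hIio (E := fun a b => e b a) he (c ∘ g) (h ∘ g)
  refine ⟨g a, g b, ?_⟩
  simpa [g.injective.extend_apply] using hab

/-- On a vector space of uncountable dimension `κ`, there is an undominated
family of norms indexed by a set of cardinality `κ`. -/
theorem stmt3 {V : Type u} [AddCommGroup V] [Module ℝ V] {κ : Cardinal.{u}}
    (hκ : Module.rank ℝ V = κ) (huncount : Cardinal.aleph0 < κ) :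
    ∃ (ι : Type u) (N : ι → V → ℝ), Cardinal.mk ι = κ ∧ (∀ i, IsNorm (N i)) ∧
      ∀ N' : V → ℝ, IsNorm N' →
        ∃ i, ∀ c : ℝ, 0 < c → ¬ ∀ x, N i x ≤ c * N' x := by
  let b := Module.Basis.ofVectorSpace ℝ V
  have hcard : #(Module.Basis.ofVectorSpaceIndex ℝ V) = κ := b.mk_eq_rank''.trans hκ
  obtain ⟨E, hE⟩ :=
    exists_mul_lt_of_aleph_one_le (hcard ▸ succ_aleph0 ▸ Order.succ_le_of_lt huncount)
  refine ⟨_, fun i => weightedNorm b fun j => E i j + 1, hcard,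
    fun i => isNorm_weightedNorm b fun j => by positivity, fun N' _ => ?_⟩
  by_contra! hdom
  choose c _ hc using hdom
  obtain ⟨i, j, hij⟩ := hE c fun j => N' (b j)
  have hdom := hc i (b j)
  rw [weightedNorm_basis] at hdom
  linarith
end

section
/- Let V be a real vector space of countable dimension (Module.rank ℝ V ≤ ℵ₀), let O be a finite open subset of V, and let F be a finite-dimensional linear subspace of V equipped with a norm N such that O contains the closed unit ball {x ∈ F : N(x) ≤ 1} of (F, N). Then N extends to a norm N' on all of V whose closed unit ball {y ∈ V : N'(y) ≤ 1} is contained in O. -/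
/-- `O` is finite open: its trace on every finite-dimensional subspace is open for the
canonical topology of that subspace (expressed via linear maps from `ℝⁿ`). -/
def FiniteOpen {V : Type*} [AddCommGroup V] [Module ℝ V] (O : Set V) : Prop :=
  ∀ (n : ℕ) (φ : (Fin n → ℝ) →ₗ[ℝ] V), IsOpen (φ ⁻¹' O)

/-!
Enumerate a spanning sequence `v₀, v₁, …` of `V` and extend the norm one vector at a time.
If `w` lies outside the finite-dimensional subspace `G` carrying the norm `M`, the closed
unit ball of `M` is compact, so by the tube lemma `x + t • w ∈ O` whenever `M x ≤ 1` and
`|t| ≤ ε`; the norm `max (M x) (|t| / ε)` on `G ⊕ ℝ w` then still has its closed unit ball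
inside `O`.
The union of the resulting increasing chain of compatible norms is a norm on all of `V`.
-/

open Filter Topology

theorem exists_span_range_eq_top_of_rank_le_aleph0 {K V : Type*} [DivisionRing K]
    [AddCommGroup V] [Module K V] (hV : Module.rank K V ≤ Cardinal.aleph0) :
    ∃ v : ℕ → V, Submodule.span K (Set.range v) = ⊤ := by
  let b := Module.Basis.ofVectorSpace K V
  have : Countable (Module.Basis.ofVectorSpaceIndex K V) :=
    Cardinal.mk_le_aleph0_iff.1 (b.mk_eq_rank''.trans_le hV)
  obtain ⟨v, hv⟩ := ((Set.countable_range b).insert 0).exists_eq_range (Set.insert_nonempty _ _)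
  refine ⟨v, eq_top_iff.2 ?_⟩
  rw [← hv, ← b.span_eq]
  exact Submodule.span_mono (Set.subset_insert _ _)

section

variable {V : Type*} [AddCommGroup V] [Module ℝ V]

namespace IsNorm

variable {N : V → ℝ} {W : Type*} [AddCommGroup W] [Module ℝ W]

theorem nonneg (hN : IsNorm N) (x : V) : 0 ≤ N x := hN.1 x
theorem eq_zero_iff (hN : IsNorm N) {x : V} : N x = 0 ↔ x = 0 := hN.2.1 x
theorem smul (hN : IsNorm N) (a : ℝ) (x : V) : N (a • x) = |a| * N x := hN.2.2.1 a x
theorem add_le (hN : IsNorm N) (x y : V) : N (x + y) ≤ N x + N y := hN.2.2.2 x y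

theorem map_zero (hN : IsNorm N) : N 0 = 0 := hN.eq_zero_iff.2 rfl

theorem map_neg (hN : IsNorm N) (x : V) : N (-x) = N x := by
  simpa using hN.smul (-1) x

abbrev toNormedAddCommGroup (hN : IsNorm N) : NormedAddCommGroup V :=
  AddGroupNorm.toNormedAddCommGroup
    { toFun := N
      map_zero' := hN.map_zero
      add_le' := hN.add_le
      neg' := hN.map_neg
      eq_zero_of_map_eq_zero' := fun _ => hN.eq_zero_iff.1 }

abbrev toNormedSpace (hN : IsNorm N) : letI := hN.toNormedAddCommGroup; NormedSpace ℝ V :=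
  letI := hN.toNormedAddCommGroup
  { ‹Module ℝ V› with norm_smul_le := fun a x => (hN.smul a x).le }

theorem of_forall_exists_submodule
    (h : ∀ x y : V, ∃ G : Submodule ℝ V, x ∈ G ∧ y ∈ G ∧ IsNorm fun z : G => N z) :
    IsNorm N := by
  refine ⟨fun x => ?_, fun x => ?_, fun a x => ?_, fun x y => ?_⟩
  · obtain ⟨G, hx, -, hG⟩ := h x x
    exact hG.nonneg ⟨x, hx⟩
  · obtain ⟨G, hx, -, hG⟩ := h x x
    simpa using hG.eq_zero_iff (x := ⟨x, hx⟩)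
  · obtain ⟨G, hx, -, hG⟩ := h x x
    exact hG.smul a ⟨x, hx⟩
  · obtain ⟨G, hx, hy, hG⟩ := h x y
    exact hG.add_le ⟨x, hx⟩ ⟨y, hy⟩

theorem comp_injective (hN : IsNorm N) (f : W →ₗ[ℝ] V) (hf : Function.Injective f) :
    IsNorm (N ∘ f) := by
  refine ⟨fun x => hN.nonneg _, fun x => ?_, fun a x => ?_, fun x y => ?_⟩
  · simp [hN.eq_zero_iff, map_eq_zero_iff f hf]
  · simp [hN.smul]
  · simpa using hN.add_le (f x) (f y)

theorem prod_max (hN : IsNorm N) {M : W → ℝ} (hM : IsNorm M) :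
    IsNorm fun p : V × W => max (N p.1) (M p.2) := by
  refine ⟨fun p => le_max_of_le_left (hN.nonneg _), fun p => ?_, fun a p => ?_, fun p q => ?_⟩
  · rw [Prod.ext_iff, Prod.fst_zero, Prod.snd_zero, ← hN.eq_zero_iff, ← hM.eq_zero_iff]
    refine ⟨fun h => ⟨?_, ?_⟩, fun h => by simp [h]⟩
    · exact le_antisymm (h ▸ le_max_left _ _) (hN.nonneg _)
    · exact le_antisymm (h ▸ le_max_right _ _) (hM.nonneg _)
  · simp [hN.smul, hM.smul, mul_max_of_nonneg]
  · exact max_le ((hN.add_le _ _).trans (add_le_add (le_max_left _ _) (le_max_left _ _)))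
      ((hM.add_le _ _).trans (add_le_add (le_max_right _ _) (le_max_right _ _)))

end IsNorm

theorem isNorm_const_mul_abs {c : ℝ} (hc : 0 < c) : IsNorm fun t : ℝ => c * |t| := by
  refine ⟨fun t => by positivity, fun t => by simp [hc.ne'], fun a t => ?_, fun s t => ?_⟩
  · simp only [smul_eq_mul, abs_mul]; ring
  · rw [← mul_add]; exact mul_le_mul_of_nonneg_left (abs_add_le s t) hc.le

namespace FiniteOpen

variable {O : Set V} {E : Type*} [AddCommGroup E] [Module ℝ E] [TopologicalSpace E]
  [IsTopologicalAddGroup E] [ContinuousSMul ℝ E] [T2Space E] [FiniteDimensional ℝ E]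

theorem isOpen_preimage (hO : FiniteOpen O) (φ : E →ₗ[ℝ] V) : IsOpen (φ ⁻¹' O) := by
  let e := Module.finBasis ℝ E |>.equivFun
  simpa [Set.preimage_preimage] using
    (hO _ (φ ∘ₗ e.symm.toLinearMap)).preimage e.toLinearMap.continuous_of_finiteDimensional

theorem eventually_forall_add_smul_mem (hO : FiniteOpen O) (φ : E →ₗ[ℝ] V) {K : Set E}
    (hK : IsCompact K) (hKO : Set.MapsTo φ K O) (w : V) :
    ∀ᶠ t in 𝓝 (0 : ℝ), ∀ x ∈ K, φ x + t • w ∈ O := by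
  refine hK.eventually_forall_of_forall_eventually fun x hx => ?_
  let ψ : ℝ × E →ₗ[ℝ] V := (LinearMap.toSpanSingleton ℝ V w).coprod φ
  have : ∀ z : ℝ × E, ψ z = φ z.2 + z.1 • w := fun z => by simp [ψ, add_comm]
  simp only [← this]
  exact (hO.isOpen_preimage ψ).mem_nhds (by simpa [this] using hKO hx)

end FiniteOpen

structure PartialNorm (O : Set V) where
  G : Submodule ℝ V
  [finiteDimensional : FiniteDimensional ℝ G]
  M : G → ℝ
  isNorm : IsNorm M
  closedBall_subset : ∀ x : G, M x ≤ 1 → (x : V) ∈ O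

namespace PartialNorm

attribute [instance] finiteDimensional

variable {O : Set V}

instance : Preorder (PartialNorm O) where
  le D D' := ∃ h : D.G ≤ D'.G, ∀ x : D.G, D'.M (Submodule.inclusion h x) = D.M x
  le_refl D := ⟨le_rfl, fun _ => rfl⟩
  le_trans _ _ _ h₁ h₂ := ⟨h₁.1.trans h₂.1, fun x => (h₂.2 _).trans (h₁.2 x)⟩

theorem exists_pos_add_smul_mem (hO : FiniteOpen O) (D : PartialNorm O) (w : V) :
    ∃ ε > 0, ∀ x : D.G, D.M x ≤ 1 → ∀ t : ℝ, |t| ≤ ε →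
      (x : V) + t • w ∈ O := by
  let := D.isNorm.toNormedAddCommGroup
  let := D.isNorm.toNormedSpace
  obtain ⟨ε, hε, h⟩ := Metric.nhds_basis_closedBall.eventually_iff.1 <|
    hO.eventually_forall_add_smul_mem D.G.subtype (isCompact_closedBall 0 1)
      (fun x hx => D.closedBall_subset x (mem_closedBall_zero_iff.1 hx)) w
  exact ⟨ε, hε, fun x hx t ht =>
    h (mem_closedBall_zero_iff.2 ht) x (mem_closedBall_zero_iff.2 hx)⟩

theorem exists_le_and_mem (hO : FiniteOpen O) (D : PartialNorm O) (w : V) :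
    ∃ D' : PartialNorm O, D ≤ D' ∧ w ∈ D'.G := by
  by_cases hw : w ∈ D.G
  · exact ⟨D, le_rfl, hw⟩
  obtain ⟨ε, hε, hO'⟩ := D.exists_pos_add_smul_mem hO w
  let ψ : D.G × ℝ →ₗ[ℝ] V := D.G.subtype.coprod (LinearMap.toSpanSingleton ℝ V w)
  have hψ : ∀ p : D.G × ℝ, ψ p = p.1 + p.2 • w := fun p => by simp [ψ]
  have hψinj : Function.Injective ψ := by
    have hw0 : w ≠ 0 := fun h => hw (h ▸ D.G.zero_mem)
    rw [← LinearMap.ker_eq_bot, LinearMap.ker_coprod_of_disjoint_range, Submodule.ker_subtype,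
      LinearMap.ker_toSpanSingleton ℝ hw0, Submodule.prod_bot]
    rwa [Submodule.range_subtype, LinearMap.range_toSpanSingleton,
      Submodule.disjoint_span_singleton' hw0]
  let e := LinearEquiv.ofInjective ψ hψinj
  have he : ∀ p, (e p : V) = p.1 + p.2 • w := hψ
  let M' : D.G × ℝ → ℝ := fun p => max (D.M p.1) (ε⁻¹ * |p.2|)
  have hM' : IsNorm M' := D.isNorm.prod_max (isNorm_const_mul_abs (inv_pos.2 hε))
  have hle : D.G ≤ LinearMap.range ψ := fun x hx => ⟨(⟨x, hx⟩, 0), by simp [hψ]⟩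
  refine ⟨⟨LinearMap.range ψ, M' ∘ e.symm, hM'.comp_injective _ e.symm.injective, ?_⟩,
    ⟨hle, fun x => ?_⟩, ⟨(0, 1), by simp [hψ]⟩⟩
  · intro y hy
    obtain ⟨p, rfl⟩ := e.surjective y
    simp only [Function.comp_apply, LinearEquiv.symm_apply_apply, M', max_le_iff,
      inv_mul_le_iff₀ hε, mul_one] at hy
    rw [he]
    exact hO' p.1 hy.1 p.2 hy.2
  · have : Submodule.inclusion hle x = e (x, 0) := Subtype.ext (by simp [he])
    simp [this, M', D.isNorm.nonneg x]

theorem exists_isNorm_of_monotone {D : ℕ → PartialNorm O} (hD : Monotone D)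
    (hcover : ∀ z, ∃ n, z ∈ (D n).G) :
    ∃ N' : V → ℝ, IsNorm N' ∧ (∀ n (x : (D n).G), N' x = (D n).M x) ∧
      ∀ z, N' z ≤ 1 → z ∈ O := by
  choose idx hidx using hcover
  let N' : V → ℝ := fun z => (D (idx z)).M ⟨z, hidx z⟩
  have hN' : ∀ n (x : (D n).G), N' x = (D n).M x := fun n x =>
    ((hD (le_max_right n (idx x))).2 ⟨x, hidx x⟩).symm.trans ((hD (le_max_left n (idx x))).2 x)
  refine ⟨N', IsNorm.of_forall_exists_submodule fun x y => ?_, hN',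
    fun z hz => (D (idx z)).closedBall_subset _ hz⟩
  let n := max (idx x) (idx y)
  refine ⟨(D n).G, (hD (le_max_left _ _)).1 (hidx x), (hD (le_max_right _ _)).1 (hidx y), ?_⟩
  simpa only [hN'] using (D n).isNorm

end PartialNorm

end

/-- In a countable-dimensional space, a norm on a finite-dimensional subspace whose
closed unit ball is included in a finite open set `O` extends to a norm on the whole
space whose closed unit ball is still included in `O`. -/
theorem stmt5 {V : Type*} [AddCommGroup V] [Module ℝ V]
    (hV : Module.rank ℝ V ≤ Cardinal.aleph0)
    (O : Set V) (hO : FiniteOpen O)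
    (F : Submodule ℝ V) [FiniteDimensional ℝ F]
    (N : F → ℝ) (hN : IsNorm N)
    (hball : ∀ y : F, N y ≤ 1 → (y : V) ∈ O) :
    ∃ N' : V → ℝ, IsNorm N' ∧ (∀ y : F, N' y = N y) ∧
      ∀ z : V, N' z ≤ 1 → z ∈ O := by
  obtain ⟨v, hv⟩ := exists_span_range_eq_top_of_rank_le_aleph0 hV
  choose extend le_extend mem_extend using PartialNorm.exists_le_and_mem hO
  let D : ℕ → PartialNorm O := fun n => n.rec ⟨F, N, hN, hball⟩ fun n Dn => extend Dn (v n)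
  have hD : Monotone D := monotone_nat_of_le_succ fun n => le_extend _ _
  have hcover : ∀ z, ∃ n, z ∈ (D n).G := by
    have : Submodule.span ℝ (Set.range v) ≤ ⨆ n, (D n).G := Submodule.span_le.2 <|
      Set.range_subset_iff.2 fun n => Submodule.mem_iSup_of_mem (n + 1) (mem_extend _ _)
    intro z
    rw [← Submodule.mem_iSup_of_directed _ (Monotone.directed_le fun _ _ h => (hD h).1)]
    exact this (hv ▸ Submodule.mem_top)
  obtain ⟨N', hN', hext, hO'⟩ := PartialNorm.exists_isNorm_of_monotone hD hcover
  exact ⟨N', hN', hext 0, hO'⟩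
end

section
/- Let κ be a cardinal, I a set, and V a real vector space with Module.rank ℝ V = κ. Then every function from κ × I to ℕ is separably dominated (i.e., 𝒫(κ, I) holds) if and only if every I-indexed family of norms on V is dominated. -/
universe u v

/-!
Fix a basis `(b j)_{j ∈ κ}` of `V`. Both sides are equivalent to a multiplicative form of
`𝒫(κ, I)`: every `f : κ × I → ℝ` is bounded by `g j * h i` for some positive `g`, `h`, since
`max G H ≤ (G + 1) (H + 1)` and `g h ≤ max (g ^ 2) (h ^ 2)`. If `N i (b j) ≤ g j * h i`, the
family `N` is dominated by the weighted `ℓ¹`-norm `x ↦ ∑ |x_j| g j`. Conversely, `f` is bounded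
by the family of weighted `ℓ¹`-norms with weights `|f (j, i)| + 1` evaluated at `b j`, and a
dominating norm `N'` with constants `c i` gives `g j = N' (b j)`, `h i = c i`.
-/

/-- The paper's `𝒫(X, Y)`. -/
def SeparablyDominated (X : Type*) (Y : Type*) : Prop :=
  ∀ f : X × Y → ℕ, ∃ (G : X → ℕ) (H : Y → ℕ), ∀ p : X × Y, f p ≤ max (G p.1) (H p.2)

def MulDominated (X : Type*) (Y : Type*) : Prop :=
  ∀ f : X × Y → ℝ, ∃ (g : X → ℝ) (h : Y → ℝ),
    (∀ x, 0 < g x) ∧ (∀ y, 0 < h y) ∧ ∀ p : X × Y, f p ≤ g p.1 * h p.2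

def NormFamiliesDominated (I : Type*) (V : Type*) [AddCommGroup V] [Module ℝ V] : Prop :=
  ∀ N : I → V → ℝ, (∀ i, IsNorm (N i)) →
    ∃ N' : V → ℝ, IsNorm N' ∧ ∀ i, ∃ c : ℝ, 0 < c ∧ ∀ x, N i x ≤ c * N' x

lemma mul_le_max_sq {R : Type*} [Semiring R] [LinearOrder R] [IsStrictOrderedRing R]
    {a b : R} (ha : 0 ≤ a) (hb : 0 ≤ b) : a * b ≤ max (a ^ 2) (b ^ 2) := by
  rcases le_total a b with hab | hab
  · exact le_max_of_le_right (by rw [sq]; exact mul_le_mul_of_nonneg_right hab hb)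
  · exact le_max_of_le_left (by rw [sq]; exact mul_le_mul_of_nonneg_left hab ha)

lemma Nat.max_le_succ_mul_succ (m n : ℕ) : max m n ≤ (m + 1) * (n + 1) := by
  rcases le_total m n with h | h <;> simp [h] <;> nlinarith

theorem separablyDominated_iff_mulDominated {X Y : Type*} :
    SeparablyDominated X Y ↔ MulDominated X Y := by
  constructor
  · intro hP f
    obtain ⟨G, H, hGH⟩ := hP fun p => ⌈f p⌉₊
    refine ⟨fun x => G x + 1, fun y => H y + 1, fun x => by positivity, fun y => by positivity,
      fun p => ?_⟩
    calc f p ≤ ⌈f p⌉₊ := Nat.le_ceil _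
      _ ≤ ((G p.1 + 1) * (H p.2 + 1) : ℕ) := by
          exact_mod_cast (hGH p).trans (Nat.max_le_succ_mul_succ _ _)
      _ = (G p.1 + 1) * (H p.2 + 1) := by push_cast; rfl
  · intro hM f
    obtain ⟨g, h, hg, hh, hgh⟩ := hM fun p => f p
    refine ⟨fun x => ⌈g x ^ 2⌉₊, fun y => ⌈h y ^ 2⌉₊, fun p => ?_⟩
    have : (f p : ℝ) ≤ max (⌈g p.1 ^ 2⌉₊ : ℝ) ⌈h p.2 ^ 2⌉₊ :=
      calc (f p : ℝ) ≤ g p.1 * h p.2 := hgh p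
        _ ≤ max (g p.1 ^ 2) (h p.2 ^ 2) := mul_le_max_sq (hg _).le (hh _).le
        _ ≤ _ := max_le_max (Nat.le_ceil _) (Nat.le_ceil _)
    exact_mod_cast this

lemma IsNorm.map_sum_le {ι V : Type*} [AddCommGroup V] [Module ℝ V] {N : V → ℝ}
    (hN : IsNorm N) (s : Finset ι) (g : ι → V) : N (∑ i ∈ s, g i) ≤ ∑ i ∈ s, N (g i) := by
  classical
  induction s using Finset.cons_induction with
  | empty => simp [(hN.2.1 0).mpr rfl]
  | cons i s hi ih =>
    rw [Finset.sum_cons, Finset.sum_cons]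
    exact (hN.2.2.2 _ _).trans (add_le_add_right ih _)

namespace Module.Basis

variable {J V : Type*} [AddCommGroup V] [Module ℝ V]

noncomputable def weightedL1 (b : Basis J ℝ V) (w : J → ℝ) (x : V) : ℝ :=
  (b.repr x).sum fun j r => |r| * w j

variable (b : Basis J ℝ V) {w : J → ℝ}

lemma weightedL1_basis (w : J → ℝ) (j : J) : b.weightedL1 w (b j) = w j := by
  simp [weightedL1]

lemma weightedL1_le_mul {w' : J → ℝ} {c : ℝ} (h : ∀ j, w j ≤ c * w' j) (x : V) :
    b.weightedL1 w x ≤ c * b.weightedL1 w' x := by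
  rw [weightedL1, weightedL1, Finsupp.sum, Finsupp.sum, Finset.mul_sum]
  refine Finset.sum_le_sum fun j _ => ?_
  rw [mul_left_comm]
  exact mul_le_mul_of_nonneg_left (h j) (abs_nonneg _)

lemma weightedL1_smul (a : ℝ) (x : V) : b.weightedL1 w (a • x) = |a| * b.weightedL1 w x := by
  rw [weightedL1, weightedL1, map_smul, Finsupp.sum_smul_index' (by simp), Finsupp.mul_sum]
  exact Finsupp.sum_congr fun j _ => by rw [smul_eq_mul, abs_mul, mul_assoc]

lemma weightedL1_add_le (hw : ∀ j, 0 ≤ w j) (x y : V) :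
    b.weightedL1 w (x + y) ≤ b.weightedL1 w x + b.weightedL1 w y := by
  classical
  have h0 : ∀ j ∈ (b.repr x).support ∪ (b.repr y).support, |(0:ℝ)| * w j = 0 := by simp
  rw [weightedL1, weightedL1, weightedL1, map_add,
    Finsupp.sum_of_support_subset _ Finsupp.support_add _ h0,
    Finsupp.sum_of_support_subset _ Finset.subset_union_left _ h0,
    Finsupp.sum_of_support_subset _ Finset.subset_union_right _ h0, ← Finset.sum_add_distrib]
  refine Finset.sum_le_sum fun j _ => ?_
  rw [Finsupp.add_apply, ← add_mul]
  exact mul_le_mul_of_nonneg_right (abs_add_le _ _) (hw j)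

lemma isNorm_weightedL1 (hw : ∀ j, 0 < w j) : IsNorm (b.weightedL1 w) := by
  have hterm : ∀ j r, 0 ≤ |r| * w j := fun j r => mul_nonneg (abs_nonneg r) (hw j).le
  refine ⟨fun x => Finset.sum_nonneg fun j _ => hterm j _, fun x => ⟨fun hx => ?_, ?_⟩,
    b.weightedL1_smul, b.weightedL1_add_le fun j => (hw j).le⟩
  · rw [weightedL1, Finsupp.sum, Finset.sum_eq_zero_iff_of_nonneg fun j _ => hterm j _] at hx
    suffices b.repr x = 0 by simpa using this
    ext j
    by_contra hj
    exact hj (by simpa [(hw j).ne'] using hx j (Finsupp.mem_support_iff.2 hj))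
  · rintro rfl
    simp [weightedL1]

lemma _root_.IsNorm.le_weightedL1 {N : V → ℝ} (hN : IsNorm N) (x : V) :
    N x ≤ b.weightedL1 (fun j => N (b j)) x :=
  calc N x = N (∑ j ∈ (b.repr x).support, b.repr x j • b j) := by
        conv_lhs => rw [← b.linearCombination_repr x]
        rw [Finsupp.linearCombination_apply, Finsupp.sum]
    _ ≤ ∑ j ∈ (b.repr x).support, N (b.repr x j • b j) := hN.map_sum_le _ _
    _ = b.weightedL1 (fun j => N (b j)) x := by
        simp only [hN.2.2.1]
        rfl

end Module.Basis

theorem Module.Basis.mulDominated_iff_normFamiliesDominated {J V : Type*} [AddCommGroup V]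
    [Module ℝ V] (b : Module.Basis J ℝ V) {I : Type*} :
    MulDominated J I ↔ NormFamiliesDominated I V := by
  constructor
  · intro hM N hN
    obtain ⟨g, h, hg, hh, hgh⟩ := hM fun p => N p.2 (b p.1)
    refine ⟨b.weightedL1 g, b.isNorm_weightedL1 hg, fun i => ⟨h i, hh i, fun x => ?_⟩⟩
    exact ((hN i).le_weightedL1 b x).trans
      (b.weightedL1_le_mul (fun j => by rw [mul_comm]; exact hgh (j, i)) x)
  · intro hD f
    have hw : ∀ i j, 0 < |f (j, i)| + 1 := fun i j => by positivity
    obtain ⟨N', hN', hc⟩ :=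
      hD (fun i => b.weightedL1 fun j => |f (j, i)| + 1) fun i => b.isNorm_weightedL1 (hw i)
    choose c hc0 hcN' using hc
    refine ⟨fun j => N' (b j), c, fun j => ?_, hc0, fun ⟨j, i⟩ => ?_⟩
    · exact lt_of_le_of_ne (hN'.1 _) (Ne.symm fun h => b.ne_zero j ((hN'.2.1 _).1 h))
    · calc f (j, i) ≤ |f (j, i)| + 1 := by linarith [le_abs_self (f (j, i))]
        _ = b.weightedL1 (fun j => |f (j, i)| + 1) (b j) :=
            (b.weightedL1_basis (fun j => |f (j, i)| + 1) j).symm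
        _ ≤ c i * N' (b j) := hcN' i (b j)
        _ = N' (b j) * c i := mul_comm _ _

/-- If `V` has dimension `κ`, then `𝒫(κ, I)` holds (every function from `κ × I` to `ℕ`
is separably dominated, `κ` being identified with an index set of that cardinality)
iff every `I`-indexed family of norms on `V` is dominated. -/
theorem stmt13 {κ : Cardinal.{u}} {I : Type v} {V : Type u}
    [AddCommGroup V] [Module ℝ V] (hV : Module.rank ℝ V = κ) :
    (∀ f : Quotient.out κ × I → ℕ, ∃ (G : Quotient.out κ → ℕ) (H : I → ℕ),
        ∀ p : Quotient.out κ × I, f p ≤ max (G p.1) (H p.2)) ↔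
      (∀ N : I → V → ℝ, (∀ i, IsNorm (N i)) →
        ∃ N' : V → ℝ, IsNorm N' ∧ ∀ i, ∃ c : ℝ, 0 < c ∧ ∀ x, N i x ≤ c * N' x) := by
  obtain ⟨e⟩ : Nonempty (Module.Basis.ofVectorSpaceIndex ℝ V ≃ κ.out) := by
    rw [← Cardinal.eq, Cardinal.mk_out, ← hV]
    exact (Module.Basis.ofVectorSpace ℝ V).mk_eq_rank''
  exact separablyDominated_iff_mulDominated.trans
    ((Module.Basis.ofVectorSpace ℝ V).reindex e).mulDominated_iff_normFamiliesDominated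
end
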